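/- Every Horton set with at least 26 points, colored arbitrarily with 4 colors, contains a monochromatic triangle with at most 1 point of the set in its interior. -/

import Mathlib

open scoped Classical

noncomputable section

/-- A planar point set is in general position if no three distinct points are collinear. -/
def GenPos (S : Set (ℝ × ℝ)) : Prop :=
  ∀ p ∈ S, ∀ q ∈ S, ∀ r ∈ S, p ≠ q → p ≠ r → q ≠ r →
    ¬ Collinear ℝ ({p, q, r} : Set (ℝ × ℝ))

/-- Number of points of `S` strictly inside the triangle `a b c`. -/
def triPts (S : Finset (ℝ × ℝ)) (a b c : ℝ × ℝ) : ℕ :=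
  (S.filter (fun p => p ∈ interior (convexHull ℝ ({a, b, c} : Set (ℝ × ℝ))))).card

/-- `S` (colored by `χ`) contains a monochromatic triangle with at most `s` interior points. -/
def MonoTriangle {c : ℕ} (S : Finset (ℝ × ℝ)) (χ : ℝ × ℝ → Fin c) (s : ℕ) : Prop :=
  ∃ a ∈ S, ∃ b ∈ S, ∃ d ∈ S, a ≠ b ∧ a ≠ d ∧ b ≠ d ∧
    χ a = χ b ∧ χ b = χ d ∧ triPts S a b d ≤ s
/-- The elements at even positions (0-based: positions 0,2,4,…) of a list. -/
def everyOther : List (ℝ × ℝ) → List (ℝ × ℝ)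
  | [] => []
  | [a] => [a]
  | a :: _ :: l => a :: everyOther l

/-- A list of points sorted by strictly increasing x-coordinate. -/
def SortedX (l : List (ℝ × ℝ)) : Prop := l.Pairwise (fun p q => p.1 < q.1)

/-- `p` lies strictly above the (non-vertical) line through `a` and `b`. -/
def AboveLine (a b p : ℝ × ℝ) : Prop :=
  a.2 + (b.2 - a.2) / (b.1 - a.1) * (p.1 - a.1) < p.2

/-- `p` lies strictly below the (non-vertical) line through `a` and `b`. -/
def BelowLine (a b p : ℝ × ℝ) : Prop :=
  p.2 < a.2 + (b.2 - a.2) / (b.1 - a.1) * (p.1 - a.1)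

/-- Horton sets, as lists sorted by x-coordinate. For a list `l`, the odd points
`H⁻` are `everyOther l` (1-indexed positions 1,3,5,…) and the even points `H⁺` are
`everyOther l.tail` (positions 2,4,6,…). Both parts are recursively Horton, every
line through two points of `H⁺` leaves all of `H⁻` strictly below it, and every
line through two points of `H⁻` leaves all of `H⁺` strictly above it. -/
inductive IsHorton : List (ℝ × ℝ) → Prop where
  | small : ∀ l : List (ℝ × ℝ), l.length ≤ 2 → SortedX l → IsHorton l
  | step : ∀ l : List (ℝ × ℝ), SortedX l → 3 ≤ l.length →
      IsHorton (everyOther l) → IsHorton (everyOther l.tail) →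
      (∀ a ∈ everyOther l.tail, ∀ b ∈ everyOther l.tail, a ≠ b →
        ∀ p ∈ everyOther l, BelowLine a b p) →
      (∀ a ∈ everyOther l, ∀ b ∈ everyOther l, a ≠ b →
        ∀ p ∈ everyOther l.tail, AboveLine a b p) →
      IsHorton l

/-!
In a Horton set the orientation of a triple of points is read off from the binary digits of
their indices: if `x` first differs from both `i` and `j` in a digit where `i` and `j` agree, then
the point `x` lies above the line through the points `i` and `j` exactly when that digit of `x`
is `1`. So for a triangle the points that may lie in its interior are determined by index
arithmetic, and a finite computation shows that every triangle with vertex indices in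
`1, …, 9` has at most one point of the set in its interior. Of nine points coloured with four
colours, three have the same colour.
-/

theorem getElem?_everyOther : ∀ (l : List (ℝ × ℝ)) (j : ℕ), (everyOther l)[j]? = l[2 * j]?
  | [], _ => rfl
  | [_], 0 => rfl
  | [_], _ + 1 => by simp [everyOther]
  | _ :: _ :: _, 0 => rfl
  | _ :: _ :: t, j + 1 => by
    rw [show 2 * (j + 1) = 2 * j + 1 + 1 by ring]
    exact getElem?_everyOther t j

theorem getElem?_everyOther_drop (l : List (ℝ × ℝ)) (i : ℕ) :
    (everyOther (l.drop (i % 2)))[i / 2]? = l[i]? := by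
  rw [getElem?_everyOther, List.getElem?_drop]
  congr 1
  omega

theorem mem_everyOther_drop {l : List (ℝ × ℝ)} {i : ℕ} {a : ℝ × ℝ} (h : l[i]? = some a) :
    a ∈ everyOther (l.drop (i % 2)) :=
  List.mem_of_getElem? ((getElem?_everyOther_drop l i).trans h)

theorem everyOther_sublist : ∀ l : List (ℝ × ℝ), List.Sublist (everyOther l) l
  | [] => .slnil
  | [_] => .refl _
  | a :: b :: t => ((everyOther_sublist t).cons b).cons_cons a

theorem SortedX.fst_lt {l : List (ℝ × ℝ)} (h : SortedX l) {i j : ℕ} {a b : ℝ × ℝ}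
    (hi : l[i]? = some a) (hj : l[j]? = some b) (hij : i < j) : a.1 < b.1 := by
  obtain ⟨hi', rfl⟩ := List.getElem?_eq_some_iff.1 hi
  obtain ⟨hj', rfl⟩ := List.getElem?_eq_some_iff.1 hj
  exact List.pairwise_iff_getElem.1 h i j hi' hj' hij

theorem SortedX.getElem_ne {l : List (ℝ × ℝ)} (h : SortedX l) {i j : ℕ} (hij : i < j)
    (hj : j < l.length) : l[i]'(hij.trans hj) ≠ l[j] := fun e =>
  (h.fst_lt (List.getElem?_eq_getElem _) (List.getElem?_eq_getElem hj) hij).ne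
    (congrArg Prod.fst e)

theorem SortedX.lt_of_fst_lt {l : List (ℝ × ℝ)} (h : SortedX l) {i j : ℕ} {a b : ℝ × ℝ}
    (hi : l[i]? = some a) (hj : l[j]? = some b) (hab : a.1 < b.1) : i < j := by
  rcases lt_trichotomy i j with hij | rfl | hji
  · exact hij
  · cases hi.symm.trans hj
    exact absurd hab (lt_irrefl _)
  · exact absurd (h.fst_lt hj hi hji) hab.not_gt

theorem IsHorton.sortedX {l : List (ℝ × ℝ)} (h : IsHorton l) : SortedX l := by
  cases h <;> assumption

theorem IsHorton.everyOther_drop {l : List (ℝ × ℝ)} (h : IsHorton l) (i : ℕ) :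
    IsHorton (everyOther (l.drop (i % 2))) := by
  have hsub : List.Sublist (everyOther (l.drop (i % 2))) l :=
    (everyOther_sublist _).trans (List.drop_sublist _ _)
  cases h with
  | small l hl hs => exact .small _ (hsub.length_le.trans hl) (hs.sublist hsub)
  | step =>
    rcases Nat.mod_two_eq_zero_or_one i with h | h <;> simpa [h]

def cross (a b p : ℝ × ℝ) : ℝ := (b.1 - a.1) * (p.2 - a.2) - (b.2 - a.2) * (p.1 - a.1)

theorem cross_swap (a b p : ℝ × ℝ) : cross b a p = -cross a b p := by
  simp only [cross]; ring

theorem cross_rotate (a b c : ℝ × ℝ) : cross a b c = cross b c a := by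
  simp only [cross]; ring

theorem cross_self_right (a b : ℝ × ℝ) : cross a b b = 0 := by
  simp only [cross]; ring

theorem cross_eq_mul {a b : ℝ × ℝ} (h : a.1 < b.1) (p : ℝ × ℝ) :
    cross a b p = (b.1 - a.1) * (p.2 - (a.2 + (b.2 - a.2) / (b.1 - a.1) * (p.1 - a.1))) := by
  have : b.1 - a.1 ≠ 0 := by linarith
  simp only [cross]; field_simp; ring

theorem cross_pos_iff_aboveLine {a b : ℝ × ℝ} (h : a.1 < b.1) (p : ℝ × ℝ) :
    0 < cross a b p ↔ AboveLine a b p := by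
  rw [cross_eq_mul h, mul_pos_iff_of_pos_left (by linarith), sub_pos, AboveLine]

theorem cross_neg_iff_belowLine {a b : ℝ × ℝ} (h : a.1 < b.1) (p : ℝ × ℝ) :
    cross a b p < 0 ↔ BelowLine a b p := by
  rw [← neg_pos, cross_eq_mul h, ← mul_neg, mul_pos_iff_of_pos_left (by linarith), neg_pos,
    sub_neg, BelowLine]

-- Examines at most `d` binary digits; the value `0` means undecided.
def hortonSide : ℕ → ℕ → ℕ → ℕ → SignType
  | 0, _, _, _ => 0
  | d + 1, i, j, x =>
    if i % 2 = j % 2 then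
      if x % 2 = i % 2 then hortonSide d (i / 2) (j / 2) (x / 2)
      else if x % 2 = 1 then 1 else -1
    else 0

theorem IsHorton.sign_cross_of_parity_ne {l : List (ℝ × ℝ)} (hH : IsHorton l)
    {i j x : ℕ} {a b p : ℝ × ℝ} (hi : l[i]? = some a) (hj : l[j]? = some b)
    (hx : l[x]? = some p) (hij : i < j) (hij₂ : i % 2 = j % 2) (hx₂ : x % 2 ≠ i % 2) :
    SignType.sign (cross a b p) = if x % 2 = 1 then 1 else -1 := by
  have hlt : a.1 < b.1 := hH.sortedX.fst_lt hi hj hij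
  have hab : a ≠ b := fun h => hlt.ne (congrArg Prod.fst h)
  have ha := mem_everyOther_drop hi
  have hb := mem_everyOther_drop hj
  have hp := mem_everyOther_drop hx
  have := (List.getElem?_eq_some_iff.1 hj).1
  have := (List.getElem?_eq_some_iff.1 hx).1
  cases hH with
  | small l hl _ => omega
  | step l _ _ _ _ hBelow hAbove =>
    split_ifs with hx₁
    · rw [show i % 2 = 0 by omega, List.drop_zero] at ha
      rw [show j % 2 = 0 by omega, List.drop_zero] at hb
      rw [hx₁, List.drop_one] at hp
      exact sign_pos ((cross_pos_iff_aboveLine hlt p).2 (hAbove a ha b hb hab p hp))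
    · rw [show i % 2 = 1 by omega, List.drop_one] at ha
      rw [show j % 2 = 1 by omega, List.drop_one] at hb
      rw [show x % 2 = 0 by omega, List.drop_zero] at hp
      exact sign_neg ((cross_neg_iff_belowLine hlt p).2 (hBelow a ha b hb hab p hp))

theorem IsHorton.sign_cross_eq_hortonSide (d : ℕ) {l : List (ℝ × ℝ)} (hH : IsHorton l)
    {i j x : ℕ} {a b p : ℝ × ℝ} (hi : l[i]? = some a) (hj : l[j]? = some b)
    (hx : l[x]? = some p) (hij : i < j) (hs : hortonSide d i j x ≠ 0) :
    SignType.sign (cross a b p) = hortonSide d i j x := by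
  induction d generalizing l i j x with
  | zero => exact absurd rfl hs
  | succ d ih =>
    unfold hortonSide at hs ⊢
    by_cases hij₂ : i % 2 = j % 2
    swap
    · rw [if_neg hij₂] at hs
      exact absurd rfl hs
    rw [if_pos hij₂] at hs ⊢
    by_cases hx₂ : x % 2 = i % 2
    · rw [if_pos hx₂] at hs ⊢
      refine ih (hH.everyOther_drop i) ?_ ?_ ?_ (by omega) hs
      · rwa [getElem?_everyOther_drop]
      · rwa [hij₂, getElem?_everyOther_drop]
      · rwa [← hx₂, getElem?_everyOther_drop]
    · rw [if_neg hx₂]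
      exact hH.sign_cross_of_parity_ne hi hj hx hij hij₂ hx₂

-- Distinct `i` and `j` differ within their first `i + j` binary digits.
def hortonLineSide (i j x : ℕ) : SignType :=
  if i < j then hortonSide (i + j) i j x else if j < i then -hortonSide (i + j) j i x else 0

theorem IsHorton.sign_cross_eq_hortonLineSide {l : List (ℝ × ℝ)} (hH : IsHorton l)
    {i j x : ℕ} {a b p : ℝ × ℝ} (hi : l[i]? = some a) (hj : l[j]? = some b)
    (hx : l[x]? = some p) (hs : hortonLineSide i j x ≠ 0) :
    SignType.sign (cross a b p) = hortonLineSide i j x := by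
  unfold hortonLineSide at hs ⊢
  split_ifs at hs ⊢ with hij hji
  · exact hH.sign_cross_eq_hortonSide _ hi hj hx hij hs
  · rw [cross_swap b a p, Left.sign_neg,
      hH.sign_cross_eq_hortonSide _ hj hi hx hji fun h => hs (by rw [h]; rfl)]
  · exact absurd rfl hs

-- The digit rule decides the side of the one point of a triple that splits off first from the
-- other two; trying the three rotations finds it.
def hortonOrient (i j k : ℕ) : SignType :=
  if hortonLineSide i j k ≠ 0 then hortonLineSide i j k
  else if hortonLineSide j k i ≠ 0 then hortonLineSide j k i else hortonLineSide k i j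

theorem IsHorton.sign_cross_eq_hortonOrient {l : List (ℝ × ℝ)} (hH : IsHorton l)
    {i j k : ℕ} {a b c : ℝ × ℝ} (ha : l[i]? = some a) (hb : l[j]? = some b)
    (hc : l[k]? = some c) (hs : hortonOrient i j k ≠ 0) :
    SignType.sign (cross a b c) = hortonOrient i j k := by
  unfold hortonOrient at hs ⊢
  split_ifs at hs ⊢ with h₁ h₂
  · exact hH.sign_cross_eq_hortonLineSide ha hb hc h₁
  · rw [cross_rotate]
    exact hH.sign_cross_eq_hortonLineSide hb hc ha h₂
  · rw [cross_rotate, cross_rotate]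
    exact hH.sign_cross_eq_hortonLineSide hc ha hb hs

theorem ContinuousLinearMap.lt_of_mem_interior_convexHull {E : Type*} [NormedAddCommGroup E]
    [NormedSpace ℝ E] {L : E →L[ℝ] ℝ} (hL : L ≠ 0) {s : Set E} {c : ℝ} (hs : ∀ y ∈ s, c ≤ L y)
    {p : E} (hp : p ∈ interior (convexHull ℝ s)) : c < L p := by
  have hull : ∀ y ∈ convexHull ℝ s, c ≤ L y := fun y hy =>
    convexHull_min hs (convex_halfSpace_ge L.toLinearMap.isLinear c) hy
  refine (hull p (interior_subset hp)).lt_of_ne fun hcp => hL ?_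
  have hmin : IsMinOn L (convexHull ℝ s) p := isMinOn_iff.2 fun y hy => hcp ▸ hull y hy
  exact (hmin.isLocalMin (mem_interior_iff_mem_nhds.1 hp)).hasFDerivAt_eq_zero L.hasFDerivAt

theorem cross_pos_of_mem_interior {a b c p : ℝ × ℝ} (hab : a ≠ b) (hc : 0 ≤ cross a b c)
    (hp : p ∈ interior (convexHull ℝ {a, b, c})) : 0 < cross a b p := by
  set L : ℝ × ℝ →L[ℝ] ℝ :=
    (b.1 - a.1) • ContinuousLinearMap.snd ℝ ℝ ℝ - (b.2 - a.2) • ContinuousLinearMap.fst ℝ ℝ ℝ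
  have hL : ∀ y, cross a b y = L y - L a := fun y => by simp [L, cross]; ring
  have hL₀ : L ≠ 0 := fun h => hab <| by
    have h₁ : L (0, 1) = 0 := by rw [h]; rfl
    have h₂ : L (1, 0) = 0 := by rw [h]; rfl
    simp [L] at h₁ h₂
    ext <;> linarith
  have := L.lt_of_mem_interior_convexHull hL₀ (c := L a) ?_ hp
  · linarith [hL p]
  · rintro y (rfl | rfl | rfl)
    · rfl
    · linarith [hL y, cross_self_right a y]
    · linarith [hL y]

theorem cross_mul_pos_of_mem_interior {a b c p : ℝ × ℝ} (hab : a ≠ b)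
    (hp : p ∈ interior (convexHull ℝ {a, b, c})) : 0 < cross a b p * cross a b c := by
  have hp' : p ∈ interior (convexHull ℝ {b, a, c}) := by rwa [Set.insert_comm]
  rcases lt_trichotomy (cross a b c) 0 with hc | hc | hc
  · have := cross_pos_of_mem_interior hab.symm (by rw [cross_swap]; linarith) hp'
    rw [cross_swap] at this
    nlinarith
  · have h₁ := cross_pos_of_mem_interior hab hc.ge hp
    have h₂ := cross_pos_of_mem_interior hab.symm (by rw [cross_swap, hc, neg_zero]) hp'
    rw [cross_swap] at h₂
    linarith
  · exact mul_pos (cross_pos_of_mem_interior hab hc.le hp) hc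

theorem lt_fst_of_mem_interior {s : Set (ℝ × ℝ)} {c : ℝ} (hs : ∀ y ∈ s, c ≤ y.1) {p : ℝ × ℝ}
    (hp : p ∈ interior (convexHull ℝ s)) : c < p.1 :=
  (ContinuousLinearMap.fst ℝ ℝ ℝ).lt_of_mem_interior_convexHull
    (fun h => by simpa using congrArg (· (1, 0)) h) hs hp

theorem fst_lt_of_mem_interior {s : Set (ℝ × ℝ)} {c : ℝ} (hs : ∀ y ∈ s, y.1 ≤ c) {p : ℝ × ℝ}
    (hp : p ∈ interior (convexHull ℝ s)) : p.1 < c := by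
  have := (-ContinuousLinearMap.fst ℝ ℝ ℝ).lt_of_mem_interior_convexHull
    (fun h => by simpa using congrArg (· (1, 0)) h) (c := -c) (fun y hy => by simpa using hs y hy)
    hp
  simpa using this

theorem IsHorton.notMem_interior_of_separated {l : List (ℝ × ℝ)} (hH : IsHorton l)
    {i j k q : ℕ} {a b c p : ℝ × ℝ} (ha : l[i]? = some a) (hb : l[j]? = some b)
    (hc : l[k]? = some c) (hp : l[q]? = some p) (hab : a ≠ b)
    (hsep : hortonOrient i j q * hortonOrient i j k = -1) :
    p ∉ interior (convexHull ℝ {a, b, c}) := by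
  intro hint
  have hq : hortonOrient i j q ≠ 0 := fun h => by simp [h] at hsep
  have hk : hortonOrient i j k ≠ 0 := fun h => by simp [h] at hsep
  have := sign_pos (cross_mul_pos_of_mem_interior hab hint)
  rw [sign_mul, hH.sign_cross_eq_hortonOrient ha hb hp hq,
    hH.sign_cross_eq_hortonOrient ha hb hc hk, hsep] at this
  exact absurd this (by decide)

def interiorCandidates (u v w : ℕ) : Finset ℕ :=
  (Finset.Ioo u w).filter fun q => q ≠ v ∧ hortonOrient u v q * hortonOrient u v w ≠ -1 ∧
    hortonOrient v w q * hortonOrient v w u ≠ -1 ∧ hortonOrient u w q * hortonOrient u w v ≠ -1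

theorem IsHorton.mem_interiorCandidates {l : List (ℝ × ℝ)} (hH : IsHorton l) {u v w q : ℕ}
    (huv : u < v) (hvw : v < w) (hw : w < l.length) (hq : q < l.length)
    (hint : l[q] ∈ interior (convexHull ℝ {l[u], l[v], l[w]})) :
    q ∈ interiorCandidates u v w := by
  have hs := hH.sortedX
  have gu : l[u]? = some l[u] := List.getElem?_eq_getElem _
  have gv : l[v]? = some l[v] := List.getElem?_eq_getElem _
  have gw : l[w]? = some l[w] := List.getElem?_eq_getElem _
  have gq : l[q]? = some l[q] := List.getElem?_eq_getElem _
  have xuv := hs.fst_lt gu gv huv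
  have xvw := hs.fst_lt gv gw hvw
  have huv' := hs.getElem_ne huv (hvw.trans hw)
  have hvw' := hs.getElem_ne hvw hw
  have huw' := hs.getElem_ne (huv.trans hvw) hw
  have huq := hs.lt_of_fst_lt gu gq <|
    lt_fst_of_mem_interior (by rintro y (rfl | rfl | rfl) <;> linarith) hint
  have hqw := hs.lt_of_fst_lt gq gw <|
    fst_lt_of_mem_interior (by rintro y (rfl | rfl | rfl) <;> linarith) hint
  have hvwu : ({l[v], l[w], l[u]} : Set (ℝ × ℝ)) = {l[u], l[v], l[w]} := by
    ext; simp only [Set.mem_insert_iff, Set.mem_singleton_iff]; tauto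
  have huwv : ({l[u], l[w], l[v]} : Set (ℝ × ℝ)) = {l[u], l[v], l[w]} := by
    ext; simp only [Set.mem_insert_iff, Set.mem_singleton_iff]; tauto
  simp only [interiorCandidates, Finset.mem_filter, Finset.mem_Ioo]
  refine ⟨⟨huq, hqw⟩, ?_, ?_, ?_, ?_⟩
  · rintro rfl
    have := cross_mul_pos_of_mem_interior huv' hint
    rw [cross_self_right, zero_mul] at this
    exact lt_irrefl _ this
  · exact fun h => hH.notMem_interior_of_separated gu gv gw gq huv' h hint
  · exact fun h => hH.notMem_interior_of_separated gv gw gu gq hvw' h (hvwu ▸ hint)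
  · exact fun h => hH.notMem_interior_of_separated gu gw gv gq huw' h (huwv ▸ hint)

theorem IsHorton.triPts_le_one {l : List (ℝ × ℝ)} (hH : IsHorton l) {u v w : ℕ}
    (huv : u < v) (hvw : v < w) (hw : w < l.length) (h : (interiorCandidates u v w).card ≤ 1) :
    triPts l.toFinset l[u] l[v] l[w] ≤ 1 := by
  refine Finset.card_le_one.2 fun p hp p' hp' => ?_
  rw [Finset.mem_filter, List.mem_toFinset] at hp hp'
  obtain ⟨q, hq, rfl⟩ := List.getElem_of_mem hp.1
  obtain ⟨q', hq', rfl⟩ := List.getElem_of_mem hp'.1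
  obtain rfl := Finset.card_le_one.1 h q (hH.mem_interiorCandidates huv hvw hw hq hp.2) q'
    (hH.mem_interiorCandidates huv hvw hw hq' hp'.2)
  rfl

-- Index `0` has to be left out: the triangle `0 1 8` contains the points `2 4 6`.
theorem card_interiorCandidates_le_one :
    ∀ w < 10, ∀ v < w, ∀ u < v, 0 < u → (interiorCandidates u v w).card ≤ 1 := by
  decide

theorem Finset.exists_lt_lt_of_two_mul_card_lt {α β : Type*} [LinearOrder α] [Fintype β]
    [DecidableEq β] (s : Finset α) (f : α → β) (h : 2 * Fintype.card β < s.card) :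
    ∃ u ∈ s, ∃ v ∈ s, ∃ w ∈ s, u < v ∧ v < w ∧ f u = f v ∧ f v = f w := by
  obtain ⟨y, -, hy⟩ := Finset.exists_lt_card_fiber_of_mul_lt_card_of_maps_to
    (t := Finset.univ) (n := 2) (fun a _ => Finset.mem_univ (f a)) (by simpa [mul_comm] using h)
  set S := s.filter (f · = y)
  have mem (i : Fin S.card) := Finset.mem_filter.1 (S.orderEmbOfFin_mem rfl i)
  let u : Fin S.card := ⟨0, by omega⟩
  let v : Fin S.card := ⟨1, by omega⟩
  let w : Fin S.card := ⟨2, by omega⟩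
  refine ⟨_, (mem u).1, _, (mem v).1, _, (mem w).1, (S.orderEmbOfFin rfl).strictMono ?_,
    (S.orderEmbOfFin rfl).strictMono ?_, (mem u).2.trans (mem v).2.symm,
    (mem v).2.trans (mem w).2.symm⟩ <;> simp [Fin.lt_def, u, v, w]

theorem horton_four_colors_general (l : List (ℝ × ℝ)) (hH : IsHorton l)
    (hlen : 26 ≤ l.length) (χ : ℝ × ℝ → Fin 4) :
    ∃ a ∈ l, ∃ b ∈ l, ∃ d ∈ l, a ≠ b ∧ a ≠ d ∧ b ≠ d ∧
      χ a = χ b ∧ χ b = χ d ∧ triPts l.toFinset a b d ≤ 1 := by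
  obtain ⟨u, hu, v, hv, w, hw, huv, hvw, hχuv, hχvw⟩ :=
    (Finset.Icc 1 9).exists_lt_lt_of_two_mul_card_lt (fun i => χ (l.getD i 0)) (by simp)
  rw [Finset.mem_Icc] at hu hv hw
  have hul : u < l.length := by omega
  have hvl : v < l.length := by omega
  have hwl : w < l.length := by omega
  rw [List.getD_eq_getElem _ _ hul, List.getD_eq_getElem _ _ hvl] at hχuv
  rw [List.getD_eq_getElem _ _ hvl, List.getD_eq_getElem _ _ hwl] at hχvw
  have hs := hH.sortedX
  exact ⟨_, List.getElem_mem hul, _, List.getElem_mem hvl, _, List.getElem_mem hwl,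
    hs.getElem_ne huv hvl, hs.getElem_ne (huv.trans hvw) hwl, hs.getElem_ne hvw hwl, hχuv, hχvw,
    hH.triPts_le_one huv hvw hwl
      (card_interiorCandidates_le_one w (by omega) v hvw u huv (by omega))⟩

/-- Every Horton set with at least 26 points (in general position), colored arbitrarily
with 4 colors, contains a monochromatic triangle with at most 1 interior point. -/
theorem horton_four_colors (l : List (ℝ × ℝ)) (hH : IsHorton l)
    (hgp : GenPos {p | p ∈ l}) (hlen : 26 ≤ l.length) (χ : ℝ × ℝ → Fin 4) :
    ∃ a ∈ l, ∃ b ∈ l, ∃ d ∈ l, a ≠ b ∧ a ≠ d ∧ b ≠ d ∧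
      χ a = χ b ∧ χ b = χ d ∧ triPts l.toFinset a b d ≤ 1 :=
  horton_four_colors_general l hH hlen χ
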